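/- arXiv:1603.05608 — 3 statements merged into one kernel-verified Lean document; each statement's English description precedes it below -/
import Mathlib

section
/- For complex z = x + iy with y > 0, |x| ≤ y, and any positive integer n, the sum ∑_{k≥1} |1/(n²z² - k²) + 1/k²| is at most 3n²y², provided 2n y ≤ 1 (so that |n²z²| ≤ k²/2 for all k ≥ 1). -/
/-! With `w = n²z²` one has `1/(w - k²) + 1/k² = w / ((w - k²) k²)`. The condition `|x| ≤ y`
puts `z²`, hence `w`, in the closed left half plane, so `|w - k²| ≥ k²`, and `|w| ≤ 2n²y²`.
Each term is therefore at most `2n²y²/k⁴`, and `2 ζ(4) = π⁴/45 < 3`. -/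

open Complex

lemma le_norm_sub_ofReal_of_re_nonpos {w : ℂ} (hw : w.re ≤ 0) (a : ℝ) :
    a ≤ ‖w - a‖ :=
  calc a ≤ |(w - a).re| := by
        rw [sub_re, ofReal_re, abs_sub_comm]
        exact (le_abs_self _).trans' (by linarith)
    _ ≤ ‖w - a‖ := abs_re_le_norm _

lemma norm_one_div_sub_add_one_div_le {w : ℂ} (hw : w.re ≤ 0) {a : ℝ} (ha : 0 < a) :
    ‖1 / (w - a) + 1 / a‖ ≤ ‖w‖ / a ^ 2 := by
  have hden : a ≤ ‖w - a‖ := le_norm_sub_ofReal_of_re_nonpos hw a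
  have hsub : w - a ≠ 0 := norm_pos_iff.mp (ha.trans_le hden)
  have ha' : (a : ℂ) ≠ 0 := ofReal_ne_zero.mpr ha.ne'
  have hsum : 1 / (w - a) + 1 / a = w / ((w - a) * a) := by
    field_simp
    ring
  rw [hsum, norm_div, norm_mul, norm_real, Real.norm_of_nonneg ha.le, sq]
  gcongr

lemma re_sq_nonpos_and_norm_sq_le {x y : ℝ} (hx : |x| ≤ y) :
    ((x + y * I) ^ 2 : ℂ).re ≤ 0 ∧ ‖(x + y * I : ℂ)‖ ^ 2 ≤ 2 * y ^ 2 := by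
  have hxy : x ^ 2 ≤ y ^ 2 := sq_le_sq' (neg_le_of_abs_le hx) (le_of_abs_le hx)
  refine ⟨?_, ?_⟩
  · simp only [sq, mul_re, add_re, add_im, ofReal_re, ofReal_im, mul_re, mul_im, I_re, I_im]
    nlinarith
  · rw [Complex.sq_norm, normSq_add_mul_I]
    linarith

lemma hasSum_pnat_one_div_pow_four :
    HasSum (fun k : ℕ+ => 1 / ((k : ℕ) : ℝ) ^ 4) (Real.pi ^ 4 / 90) :=
  (hasSum_pnat_iff (f := fun n : ℕ => 1 / (n : ℝ) ^ 4)).mpr (by simpa using hasSum_zeta_four)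

lemma pi_pow_four_div_ninety_lt : Real.pi ^ 4 / 90 < 3 / 2 := by
  have hpi : Real.pi ^ 2 < 10 := by nlinarith [Real.pi_lt_d2, Real.pi_pos]
  nlinarith [sq_nonneg Real.pi]

lemma tsum_le_of_norm_le_div_pow_four {E : Type*} [SeminormedAddCommGroup E] {f : ℕ+ → E}
    {C : ℝ} (hf : ∀ k : ℕ+, ‖f k‖ ≤ C / ((k : ℕ) : ℝ) ^ 4) :
    ∑' k, ‖f k‖ ≤ C * (Real.pi ^ 4 / 90) := by
  have hmaj : HasSum (fun k : ℕ+ => C / ((k : ℕ) : ℝ) ^ 4) (C * (Real.pi ^ 4 / 90)) := by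
    simpa only [mul_one_div] using hasSum_pnat_one_div_pow_four.mul_left C
  exact hmaj.tsum_eq ▸ Summable.tsum_le_tsum hf
    (hmaj.summable.of_nonneg_of_le (fun _ => norm_nonneg _) hf) hmaj.summable

theorem stmt3_general (x y : ℝ) (z : ℂ) (hz : z = (x : ℂ) + (y : ℂ) * Complex.I)
    (hx : |x| ≤ y) (n : ℕ) :
    ∑' k : ℕ+, ‖1 / ((n : ℂ) ^ 2 * z ^ 2 - ((k : ℕ) : ℂ) ^ 2) + 1 / ((k : ℕ) : ℂ) ^ 2‖ ≤
      3 * (n : ℝ) ^ 2 * y ^ 2 := by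
  obtain ⟨hre, hnorm⟩ := re_sq_nonpos_and_norm_sq_le hx
  rw [← hz] at hre hnorm
  have hw_re : ((n : ℂ) ^ 2 * z ^ 2).re ≤ 0 := by
    rw [← ofReal_natCast, ← ofReal_pow, re_ofReal_mul]
    exact mul_nonpos_of_nonneg_of_nonpos (by positivity) hre
  have hw_norm : ‖(n : ℂ) ^ 2 * z ^ 2‖ ≤ 2 * (n : ℝ) ^ 2 * y ^ 2 :=
    calc _ = (n : ℝ) ^ 2 * ‖z‖ ^ 2 := by rw [norm_mul, norm_pow, norm_pow, norm_natCast]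
      _ ≤ (n : ℝ) ^ 2 * (2 * y ^ 2) := by gcongr
      _ = _ := by ring
  have hterm : ∀ k : ℕ+,
      ‖1 / ((n : ℂ) ^ 2 * z ^ 2 - ((k : ℕ) : ℂ) ^ 2) + 1 / ((k : ℕ) : ℂ) ^ 2‖ ≤
        2 * (n : ℝ) ^ 2 * y ^ 2 / ((k : ℕ) : ℝ) ^ 4 := fun k => by
    have hk : (0 : ℝ) < ((k : ℕ) : ℝ) ^ 2 := by positivity
    have hbound := norm_one_div_sub_add_one_div_le hw_re hk
    push_cast at hbound
    rw [← pow_mul] at hbound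
    exact hbound.trans (by gcongr)
  calc _ ≤ 2 * (n : ℝ) ^ 2 * y ^ 2 * (Real.pi ^ 4 / 90) := tsum_le_of_norm_le_div_pow_four hterm
    _ ≤ 2 * (n : ℝ) ^ 2 * y ^ 2 * (3 / 2) :=
        mul_le_mul_of_nonneg_left pi_pow_four_div_ninety_lt.le (by positivity)
    _ = 3 * (n : ℝ) ^ 2 * y ^ 2 := by ring

theorem stmt3 (x y : ℝ) (z : ℂ) (hz : z = (x : ℂ) + (y : ℂ) * Complex.I)
    (hy : 0 < y) (hx : |x| ≤ y) (n : ℕ) (hn : 1 ≤ n) (hny : 2 * (n : ℝ) * y ≤ 1) :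
    ∑' k : ℕ+, ‖1 / ((n : ℂ) ^ 2 * z ^ 2 - ((k : ℕ) : ℂ) ^ 2) + 1 / ((k : ℕ) : ℂ) ^ 2‖ ≤
      3 * (n : ℝ) ^ 2 * y ^ 2 :=
  stmt3_general x y z hz hx n
end

section
/- Let A, B be such that 2A ∈ ℕ, 2B ∈ ℤ, and A+B is a positive integer, and let h_{A,B}(q) = ∑_{n≥1} (-1)^n q^{An²+Bn}/(1-q^n) for |q| < 1. Then for q = e^{2πiz} with z = x+iy, y > 0 and y ≤ |x| ≤ 1/2 - y, there is an absolute constant C (depending only on A, B) with |h_{A,B}(q)| ≤ C·y^{-3/2}. -/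
/-!
Every coefficient `An² + Bn` is at least `n`, so with `t = 2π n y` the `n`-th term is bounded by
`e^{-t} / (1 - e^{-t}) = (e^t - 1)⁻¹`. Since `e^t - 1 ≥ t + t²/2 ≥ t^{3/2}`, this is at most
`(2π n y)^{-3/2}`, and summing over `n` gives `ζ(3/2) (2π y)^{-3/2}`.
-/

open Complex

lemma Real.rpow_three_halves_le_exp_sub_one {t : ℝ} (ht : 0 ≤ t) :
    t ^ (3 / 2 : ℝ) ≤ Real.exp t - 1 := by
  have h_sqrt : √t ≤ 1 + t / 2 := by
    nlinarith [sq_nonneg (√t - 1), Real.sq_sqrt ht]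
  calc t ^ (3 / 2 : ℝ) = t * √t := by
        rw [show (3 / 2 : ℝ) = 1 + 1 / 2 by norm_num, Real.rpow_add' ht (by norm_num),
          Real.rpow_one, ← Real.sqrt_eq_rpow]
    _ ≤ t * (1 + t / 2) := by gcongr
    _ ≤ Real.exp t - 1 := by nlinarith [Real.quadratic_le_exp_of_nonneg ht]

lemma Real.inv_exp_sub_one_le_rpow {t : ℝ} (ht : 0 < t) :
    (Real.exp t - 1)⁻¹ ≤ t ^ (-(3 / 2 : ℝ)) := by
  rw [Real.rpow_neg ht.le]
  exact inv_anti₀ (by positivity) (Real.rpow_three_halves_le_exp_sub_one ht.le)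

lemma norm_div_one_sub_le {𝕜 : Type*} [NormedField 𝕜] {u v : 𝕜} (hv : ‖v‖ < 1)
    (huv : ‖u‖ ≤ ‖v‖) : ‖u / (1 - v)‖ ≤ ‖v‖ / (1 - ‖v‖) := by
  have h_den : 1 - ‖v‖ ≤ ‖1 - v‖ := by simpa using norm_sub_norm_le (1 : 𝕜) v
  rw [norm_div]
  exact div_le_div₀ (norm_nonneg v) huv (by linarith) h_den

lemma norm_exp_two_pi_I_mul_ofReal (z : ℂ) (w : ℝ) :
    ‖exp (2 * Real.pi * I * z * w)‖ = Real.exp (-(2 * Real.pi * z.im * w)) := by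
  rw [Complex.norm_exp]
  congr 1
  simp [Complex.mul_re, Complex.mul_im]

lemma norm_exp_two_pi_I_pow (z : ℂ) (n : ℕ) :
    ‖exp (2 * Real.pi * I * z) ^ n‖ = Real.exp (-(2 * Real.pi * z.im * n)) := by
  rw [← Complex.exp_nat_mul, mul_comm (n : ℂ), ← Complex.ofReal_natCast,
    norm_exp_two_pi_I_mul_ofReal]

lemma norm_neg_one_pow_mul_exp_div_le {z : ℂ} (hz : 0 < z.im) {n : ℕ} (hn : 0 < n) {w : ℝ}
    (hnw : n ≤ w) :
    ‖(-1 : ℂ) ^ n * exp (2 * Real.pi * I * z * w) / (1 - exp (2 * Real.pi * I * z) ^ n)‖ ≤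
      (2 * Real.pi) ^ (-(3 / 2 : ℝ)) * (n : ℝ) ^ (-(3 / 2 : ℝ)) * z.im ^ (-(3 / 2 : ℝ)) := by
  set t := 2 * Real.pi * z.im * n
  have ht : 0 < t := by positivity
  have h_num : ‖(-1 : ℂ) ^ n * exp (2 * Real.pi * I * z * w)‖ ≤
      ‖exp (2 * Real.pi * I * z) ^ n‖ := by
    rw [norm_mul, norm_pow, norm_neg, norm_one, one_pow, one_mul,
      norm_exp_two_pi_I_mul_ofReal, norm_exp_two_pi_I_pow, Real.exp_le_exp, neg_le_neg_iff]
    gcongr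
  have h_lt : ‖exp (2 * Real.pi * I * z) ^ n‖ < 1 := by
    rw [norm_exp_two_pi_I_pow, Real.exp_lt_one_iff]
    exact neg_lt_zero.mpr ht
  calc _ ≤ Real.exp (-t) / (1 - Real.exp (-t)) := by
        rw [← norm_exp_two_pi_I_pow]
        exact norm_div_one_sub_le h_lt h_num
    _ = (Real.exp t - 1)⁻¹ := by
        have : Real.exp t - 1 ≠ 0 := by linarith [Real.add_one_lt_exp ht.ne']
        rw [Real.exp_neg]
        field_simp
    _ ≤ t ^ (-(3 / 2 : ℝ)) := Real.inv_exp_sub_one_le_rpow ht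
    _ = _ := by
        rw [Real.mul_rpow (by positivity) (by positivity), Real.mul_rpow (by positivity) hz.le]
        ring

lemma le_quadratic_of_one_le_add {A B : ℝ} (hA : 0 ≤ A) (hAB : 1 ≤ A + B) {n : ℝ}
    (hn : 1 ≤ n) : n ≤ A * n ^ 2 + B * n := by
  nlinarith [mul_nonneg (mul_nonneg hA (by linarith : 0 ≤ n)) (by linarith : 0 ≤ n - 1)]

theorem stmt4_general (A B : ℝ) (a : ℕ) (c : ℕ)
    (ha : 2 * A = (a : ℝ)) (hc : 0 < c) (hAB : A + B = (c : ℝ)) :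
    ∃ C : ℝ, ∀ x y : ℝ, 0 < y → y ≤ |x| → |x| ≤ 1 / 2 - y →
      ‖∑' n : ℕ+, (-1 : ℂ) ^ (n : ℕ) *
          Complex.exp (2 * Real.pi * Complex.I * ((x : ℂ) + (y : ℂ) * Complex.I) *
            ((A * ((n : ℕ) : ℝ) ^ 2 + B * ((n : ℕ) : ℝ) : ℝ) : ℂ)) /
          (1 - Complex.exp (2 * Real.pi * Complex.I * ((x : ℂ) + (y : ℂ) * Complex.I)) ^ (n : ℕ))‖ ≤
        C * y ^ (-(3 / 2 : ℝ)) := by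
  have hA : 0 ≤ A := by linarith [(Nat.cast_nonneg a : (0 : ℝ) ≤ a)]
  have hAB' : 1 ≤ A + B := hAB ▸ (Nat.one_le_cast.mpr hc)
  have h_summable : Summable fun n : ℕ+ => ((n : ℕ) : ℝ) ^ (-(3 / 2 : ℝ)) :=
    (Real.summable_nat_rpow.mpr (by norm_num)).comp_injective PNat.coe_injective
  refine ⟨(2 * Real.pi) ^ (-(3 / 2 : ℝ)) * ∑' n : ℕ+, ((n : ℕ) : ℝ) ^ (-(3 / 2 : ℝ)),
    fun x y hy _ _ => ?_⟩
  have him : ((x : ℂ) + (y : ℂ) * I).im = y := by simp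
  refine tsum_of_norm_bounded ((h_summable.hasSum.mul_left _).mul_right _) fun n => ?_
  have h_term := norm_neg_one_pow_mul_exp_div_le (him ▸ hy) n.pos
    (le_quadratic_of_one_le_add hA hAB' (Nat.one_le_cast.mpr n.pos))
  rwa [him] at h_term

/-- Bound for `h_{A,B}(q) = ∑_{n≥1} (-1)^n q^{An²+Bn}/(1-q^n)` away from the dominant
poles, where `q = e^{2πiz}`, `z = x+iy` with `y ≤ |x| ≤ 1/2 - y`.  Here `2A ∈ ℕ`,
`2B ∈ ℤ` and `A+B` is a positive integer. -/
theorem stmt4 (A B : ℝ) (a : ℕ) (b : ℤ) (c : ℕ)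
    (ha : 2 * A = (a : ℝ)) (hb : 2 * B = (b : ℝ)) (hc : 0 < c) (hAB : A + B = (c : ℝ)) :
    ∃ C : ℝ, ∀ x y : ℝ, 0 < y → y ≤ |x| → |x| ≤ 1 / 2 - y →
      ‖∑' n : ℕ+, (-1 : ℂ) ^ (n : ℕ) *
          Complex.exp (2 * Real.pi * Complex.I * ((x : ℂ) + (y : ℂ) * Complex.I) *
            ((A * ((n : ℕ) : ℝ) ^ 2 + B * ((n : ℕ) : ℝ) : ℝ) : ℂ)) /
          (1 - Complex.exp (2 * Real.pi * Complex.I * ((x : ℂ) + (y : ℂ) * Complex.I)) ^ (n : ℕ))‖ ≤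
        C * y ^ (-(3 / 2 : ℝ)) :=
  stmt4_general A B a c ha hc hAB
end

section
/- For q = e^{2πiz} in the upper half plane, the two-variable spt-crank generating function satisfies S_{C₁}(z₀,q) = (1/((1−z₀)(1−z₀⁻¹)))·(R(z₀,q²) − (q;q²)_∞ C(z₀,q)) equals (1/(q²;q²)_∞) ∑_{n≥1} (-1)^{n-1} ( q^{n(n+1)/2}(1+q^n)/((1−z₀q^n)(1−q^n/z₀)) − q^{3n²+n}(1+q^{2n})/((1−z₀q^{2n})(1−q^{2n}/z₀)) ), where R and C have the Lambert series expansions R(z₀,q) = (1−z₀)/(q;q)_∞ ∑_{n∈ℤ} (-1)^n q^{n(3n+1)/2}/(1−z₀q^n)-type and C(z₀,q) = ((1−z₀)/(q;q)_∞) ∑_{n∈ℤ} (-1)^n q^{n(n+1)/2}/(1−z₀q^n)-type standard expansions. -/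
/-!
`R(z, Q)` and `C(z, Q)` are `(1 - z) / (Q; Q)_∞` times Lambert series
`∑_{m ∈ ℤ} (-1)^m Q^(e m) / (1 - z Q^m)` whose exponents `e m = m (c m + 1) / 2` (`c = 3` and
`c = 1`) satisfy `e (-n) + n = e n`. This symmetry combines the terms `m = n` and `m = -n` into
`(1 - z⁻¹) (-1)^n Q^(e n) (1 + Q^n) / ((1 - z Q^n) (1 - Q^n / z))`, so each series is `1 / (1 - z)`
plus `1 - z⁻¹` times a series over `n ≥ 1`. Take `Q = q²` for `R` and `Q = q` for `C`: the factor
`(q; q²)_∞` in front of `C` turns `(q; q)_∞` into `(q²; q²)_∞`, since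
`(q; q)_∞ = (q; q²)_∞ (q²; q²)_∞`, the two constants `1 / (1 - z)` cancel, and the prefactor
`1 / ((1 - z) (1 - z⁻¹))` absorbs what is left.
-/

open Filter Topology Asymptotics

/-- The rank generating function `R(z,q)` via its standard Lambert series expansion
`R(z,q) = (1-z)/(q;q)_∞ ∑_{n∈ℤ} (-1)ⁿ q^{n(3n+1)/2}/(1-zqⁿ)`. -/
noncomputable def Rfun (z q : ℂ) : ℂ :=
  (1 - z) / (∏' n : ℕ, (1 - q ^ (n + 1))) *
    ∑' n : ℤ, (-1 : ℂ) ^ n * q ^ (n * (3 * n + 1) / 2).toNat / (1 - z * q ^ n)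

/-- The crank generating function `C(z,q)` via its standard Lambert series expansion
`C(z,q) = (1-z)/(q;q)_∞ ∑_{n∈ℤ} (-1)ⁿ q^{n(n+1)/2}/(1-zqⁿ)`. -/
noncomputable def Cfun (z q : ℂ) : ℂ :=
  (1 - z) / (∏' n : ℕ, (1 - q ^ (n + 1))) *
    ∑' n : ℤ, (-1 : ℂ) ^ n * q ^ (n * (n + 1) / 2).toNat / (1 - z * q ^ n)

section Exponent

variable {c : ℤ}

theorem even_mul_mul_add_one (hc : Odd c) (m : ℤ) : Even (m * (c * m + 1)) := by
  rcases Int.even_or_odd m with hm | hm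
  · exact hm.mul_right _
  · exact (hc.mul hm).add_one.mul_left _

theorem two_mul_le_mul_mul_add_one (hc : 0 < c) (n : ℕ) : 2 * (n : ℤ) ≤ n * (c * n + 1) := by
  have hsq : (n : ℤ) ≤ n * n := mod_cast Nat.le_mul_self n
  have hle : 0 ≤ (c - 1) * (n * n) := mul_nonneg (by omega) (by positivity)
  linear_combination hsq + hle

theorem toNat_neg_mul_add_one_div_two (hc : Odd c) (hc0 : 0 < c) (n : ℕ) :
    ((-n : ℤ) * (c * -n + 1) / 2).toNat + n = ((n : ℤ) * (c * n + 1) / 2).toNat := by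
  obtain ⟨k, hk⟩ := even_mul_mul_add_one hc n
  have hle := two_mul_le_mul_mul_add_one hc0 n
  have hneg : (-n : ℤ) * (c * -n + 1) = n * (c * n + 1) - 2 * n := by ring
  rw [hneg]
  omega

theorem le_toNat_mul_add_one_div_two (hc : 0 < c) (n : ℕ) :
    n ≤ ((n : ℤ) * (c * n + 1) / 2).toNat := by
  have := two_mul_le_mul_mul_add_one hc n
  omega

theorem two_mul_toNat_mul_add_one_div_two (hc : Odd c) (hc0 : 0 < c) (n : ℕ) :
    (2 * ((n : ℤ) * (c * n + 1) / 2).toNat : ℤ) = n * (c * n + 1) := by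
  obtain ⟨k, hk⟩ := even_mul_mul_add_one hc n
  have := two_mul_le_mul_mul_add_one hc0 n
  omega

end Exponent

section Products

variable {𝕜 : Type*} [NormedField 𝕜] {q : 𝕜}

theorem summable_norm_pow_comp (hq : ‖q‖ < 1) {a : ℕ → ℕ} (ha : ∀ k, k ≤ a k) :
    Summable fun k ↦ ‖q ^ a k‖ :=
  (summable_geometric_of_lt_one (norm_nonneg q) hq).of_nonneg_of_le (fun _ ↦ norm_nonneg _)
    fun k ↦ by rw [norm_pow]; exact pow_le_pow_of_le_one (norm_nonneg q) hq.le (ha k)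

theorem multipliable_one_sub_pow_comp [CompleteSpace 𝕜] (hq : ‖q‖ < 1) {a : ℕ → ℕ}
    (ha : ∀ k, k ≤ a k) : Multipliable fun k ↦ 1 - q ^ a k := by
  simpa [sub_eq_add_neg] using multipliable_one_add_of_summable (f := fun k ↦ -q ^ a k)
    (by simpa using summable_norm_pow_comp hq ha)

theorem tprod_one_sub_pow_comp_ne_zero [CompleteSpace 𝕜] (hq : ‖q‖ < 1) {a : ℕ → ℕ}
    (ha : ∀ k, k < a k) : ∏' k, (1 - q ^ a k) ≠ 0 := by
  have hne : ∀ k, 1 + -q ^ a k ≠ 0 := fun k h ↦ by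
    have hlt : ‖q ^ a k‖ < 1 := by
      rw [norm_pow]; exact pow_lt_one₀ (norm_nonneg q) hq (Nat.ne_zero_of_lt (ha k))
    rw [show q ^ a k = 1 by linear_combination -h, norm_one] at hlt
    exact hlt.false
  simpa [sub_eq_add_neg] using tprod_one_add_ne_zero_of_summable hne
    (by simpa using summable_norm_pow_comp hq fun k ↦ (ha k).le)

theorem tprod_one_sub_pow_succ_eq_mul [CompleteSpace 𝕜] (hq : ‖q‖ < 1) :
    ∏' n, (1 - q ^ (n + 1)) =
      (∏' k, (1 - q * (q ^ 2) ^ k)) * ∏' k, (1 - (q ^ 2) ^ (k + 1)) := by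
  rw [← tprod_even_mul_odd (f := fun n ↦ 1 - q ^ (n + 1))
    (multipliable_one_sub_pow_comp hq fun k ↦ by omega)
    (multipliable_one_sub_pow_comp hq fun k ↦ by omega)]
  congr 1 <;> exact tprod_congr fun k ↦ by ring

end Products

def lambertTerm {𝕜 : Type*} [Field 𝕜] (e : ℤ → ℕ) (z Q : 𝕜) (m : ℤ) : 𝕜 :=
  (-1) ^ m * Q ^ e m / (1 - z * Q ^ m)

def lambertPairTerm {𝕜 : Type*} [Field 𝕜] (e : ℤ → ℕ) (z Q : 𝕜) (n : ℕ) : 𝕜 :=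
  (-1) ^ n * (Q ^ e n * (1 + Q ^ n) / ((1 - z * Q ^ n) * (1 - Q ^ n / z)))

section Lambert

variable {𝕜 : Type*} [NormedField 𝕜] {e : ℤ → ℕ} {z Q : 𝕜}

theorem lambertTerm_zero (e : ℤ → ℕ) (z Q : 𝕜) (he : e 0 = 0) :
    lambertTerm e z Q 0 = 1 / (1 - z) := by
  simp [lambertTerm, he]

theorem summable_norm_pow_comp_div_one_sub (hQ : ‖Q‖ < 1) {a : ℕ → ℕ} (ha : ∀ n, n ≤ a n)
    (w : 𝕜) : Summable fun n ↦ ‖Q ^ a n / (1 - w * Q ^ n)‖ := by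
  have hlim : Tendsto (fun n : ℕ ↦ (1 - w * Q ^ n)⁻¹) atTop (𝓝 1) := by
    simpa using (((tendsto_pow_atTop_nhds_zero_of_norm_lt_one hQ).const_mul w).const_sub 1).inv₀
      (by simp)
  have hO := ((isBigO_refl (fun n ↦ Q ^ a n) atTop).mul (hlim.isBigO_one 𝕜)).norm_norm
  refine summable_of_isBigO_nat (summable_norm_pow_comp hQ ha) ?_
  simpa [div_eq_mul_inv] using hO

theorem lambertTerm_neg (hQ : Q ≠ 0) (hz : z ≠ 0) {n : ℕ} (hsym : e (-n) + n = e n) :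
    lambertTerm e z Q (-n) = -z⁻¹ * ((-1) ^ n * Q ^ e n / (1 - z⁻¹ * Q ^ n)) := by
  have hN : Q ^ n ≠ 0 := pow_ne_zero n hQ
  rw [lambertTerm, zpow_neg, zpow_natCast, zpow_neg, zpow_natCast, ← inv_pow, inv_neg, inv_one,
    ← hsym, pow_add]
  by_cases h : Q ^ n = z
  -- both denominators vanish, and both sides are the junk value `0`
  · simp [h, hz]
  · have : Q ^ n - z ≠ 0 := sub_ne_zero.mpr h
    have : z - Q ^ n ≠ 0 := sub_ne_zero.mpr (Ne.symm h)
    field_simp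
    ring

theorem lambertTerm_add_lambertTerm_neg (hQ : Q ≠ 0) (hz : z ≠ 0) {n : ℕ}
    (hsym : e (-n) + n = e n) (h₁ : z * Q ^ n ≠ 1) (h₂ : Q ^ n / z ≠ 1) :
    lambertTerm e z Q n + lambertTerm e z Q (-n) = (1 - z⁻¹) * lambertPairTerm e z Q n := by
  rw [lambertTerm_neg hQ hz hsym, lambertTerm, lambertPairTerm, zpow_natCast, zpow_natCast]
  have : 1 - z * Q ^ n ≠ 0 := sub_ne_zero.mpr (Ne.symm h₁)
  have : z - Q ^ n ≠ 0 := fun h ↦ h₂ (by rw [← sub_eq_zero.mp h, div_self hz])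
  field_simp
  ring

theorem summable_lambertTerm [CompleteSpace 𝕜] (hQ : ‖Q‖ < 1) (hQ0 : Q ≠ 0) (hz : z ≠ 0)
    (hsym : ∀ n : ℕ, e (-n) + n = e n) (hgrow : ∀ n : ℕ, n ≤ e n) :
    Summable (lambertTerm e z Q) := by
  refine .of_nat_of_neg (.of_norm ?_) (.of_norm ?_)
  · refine (summable_norm_pow_comp_div_one_sub hQ hgrow z).congr fun n ↦ ?_
    simp [lambertTerm]
  · refine ((summable_norm_pow_comp_div_one_sub hQ hgrow z⁻¹).mul_left ‖z⁻¹‖).congr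
      fun n ↦ ?_
    simp [lambertTerm_neg hQ0 hz (hsym n)]

theorem hasSum_lambertPairTerm [CompleteSpace 𝕜] (hQ : ‖Q‖ < 1) (hQ0 : Q ≠ 0) (hz : z ≠ 0)
    (hden : ∀ n : ℕ+, z * Q ^ (n : ℕ) ≠ 1 ∧ Q ^ (n : ℕ) / z ≠ 1)
    (hsym : ∀ n : ℕ, e (-n) + n = e n) (hgrow : ∀ n : ℕ, n ≤ e n) :
    HasSum (fun n : ℕ+ ↦ (1 - z⁻¹) * lambertPairTerm e z Q n)
      (∑' m, lambertTerm e z Q m - lambertTerm e z Q 0) := by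
  have hpairs := (summable_lambertTerm (e := e) hQ hQ0 hz hsym hgrow).hasSum.nat_add_neg
  have hpnat : HasSum (fun n : ℕ+ ↦ lambertTerm e z Q (n : ℕ) + lambertTerm e z Q (-(n : ℕ)))
      (∑' m, lambertTerm e z Q m - lambertTerm e z Q 0) := by
    refine (hasSum_pnat_iff
      (f := fun n : ℕ ↦ lambertTerm e z Q n + lambertTerm e z Q (-n))).mpr ?_
    rwa [Nat.cast_zero, neg_zero, sub_add_add_cancel]
  exact hpnat.congr_fun fun n ↦
    (lambertTerm_add_lambertTerm_neg hQ0 hz (hsym n) (hden n).1 (hden n).2).symm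

theorem hasSum_lambertPairTerm_of_odd [CompleteSpace 𝕜] {c : ℤ} (hc : Odd c) (hc0 : 0 < c) (hQ : ‖Q‖ < 1) (hQ0 : Q ≠ 0) (hz : z ≠ 0)
    (hden : ∀ n : ℕ+, z * Q ^ (n : ℕ) ≠ 1 ∧ Q ^ (n : ℕ) / z ≠ 1) :
    HasSum
      (fun n : ℕ+ ↦ (1 - z⁻¹) * lambertPairTerm (fun m : ℤ ↦ (m * (c * m + 1) / 2).toNat) z Q n)
      (∑' m, lambertTerm (fun m : ℤ ↦ (m * (c * m + 1) / 2).toNat) z Q m - 1 / (1 - z)) := by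
  convert hasSum_lambertPairTerm (e := fun m : ℤ ↦ (m * (c * m + 1) / 2).toNat)
    hQ hQ0 hz hden (toNat_neg_mul_add_one_div_two hc hc0)
    (le_toNat_mul_add_one_div_two hc0) using 2
  exact (lambertTerm_zero _ z Q (by simp)).symm

end Lambert

theorem neg_one_pow_pred_mul_sub_eq_lambertPairTerm_sub {𝕜 : Type*} [Field 𝕜] (z q : 𝕜)
    {n : ℕ} (hn : 0 < n) :
    (-1) ^ (n - 1) *
      (q ^ (n * (n + 1) / 2) * (1 + q ^ n) / ((1 - z * q ^ n) * (1 - q ^ n / z)) -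
        q ^ (3 * n ^ 2 + n) * (1 + q ^ (2 * n)) /
          ((1 - z * q ^ (2 * n)) * (1 - q ^ (2 * n) / z))) =
      lambertPairTerm (fun m : ℤ ↦ (m * (3 * m + 1) / 2).toNat) z (q ^ 2) n -
        lambertPairTerm (fun m : ℤ ↦ (m * (m + 1) / 2).toNat) z q n := by
  have hC : ((n : ℤ) * (n + 1) / 2).toNat = n * (n + 1) / 2 := by
    have h := two_mul_toNat_mul_add_one_div_two odd_one one_pos n
    have h' : ((n * (n + 1) : ℕ) : ℤ) = n * (n + 1) := by push_cast; ring
    rw [one_mul] at h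
    omega
  have hR : 2 * ((n : ℤ) * (3 * n + 1) / 2).toNat = 3 * n ^ 2 + n := by
    have h := two_mul_toNat_mul_add_one_div_two (c := 3) (by decide) (by norm_num) n
    have h' : ((3 * n ^ 2 + n : ℕ) : ℤ) = n * (3 * n + 1) := by push_cast; ring
    omega
  simp only [lambertPairTerm, ← pow_mul, hC, hR]
  obtain ⟨k, rfl⟩ : ∃ k, n = k + 1 := ⟨n - 1, by omega⟩
  rw [Nat.add_sub_cancel, pow_succ]
  ring

theorem stmt17 (τ z₀ : ℂ) (hτ : 0 < τ.im) (hz₀ : z₀ ≠ 0) (hz₁ : z₀ ≠ 1)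
    (q : ℂ) (hq : q = Complex.exp (2 * Real.pi * Complex.I * τ))
    (hden : ∀ n : ℕ+, z₀ * q ^ (n : ℕ) ≠ 1 ∧ q ^ (n : ℕ) / z₀ ≠ 1) :
    1 / ((1 - z₀) * (1 - z₀⁻¹)) *
        (Rfun z₀ (q ^ 2) - (∏' k : ℕ, (1 - q * (q ^ 2) ^ k)) * Cfun z₀ q) =
      (∏' k : ℕ, (1 - q ^ (2 * k + 2)))⁻¹ *
        ∑' n : ℕ+, (-1 : ℂ) ^ ((n : ℕ) - 1) *
          (q ^ ((n : ℕ) * ((n : ℕ) + 1) / 2) * (1 + q ^ (n : ℕ)) /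
              ((1 - z₀ * q ^ (n : ℕ)) * (1 - q ^ (n : ℕ) / z₀)) -
            q ^ (3 * (n : ℕ) ^ 2 + (n : ℕ)) * (1 + q ^ (2 * (n : ℕ))) /
              ((1 - z₀ * q ^ (2 * (n : ℕ))) * (1 - q ^ (2 * (n : ℕ)) / z₀))) := by
  have hq1 : ‖q‖ < 1 := by simpa [hq] using UpperHalfPlane.norm_exp_two_pi_I_lt_one ⟨τ, hτ⟩
  have hq0 : q ≠ 0 := hq ▸ Complex.exp_ne_zero _
  have hq2 : ‖q ^ 2‖ < 1 := by
    rw [norm_pow]; exact pow_lt_one₀ (norm_nonneg q) hq1 two_ne_zero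
  have hden2 : ∀ n : ℕ+, z₀ * (q ^ 2) ^ (n : ℕ) ≠ 1 ∧ (q ^ 2) ^ (n : ℕ) / z₀ ≠ 1 :=
    fun n ↦ by simpa [← pow_mul] using hden (2 * n)
  have hc : 1 - z₀⁻¹ ≠ 0 := sub_ne_zero.mpr (by simpa [eq_comm] using hz₁)
  have hsum := ((hasSum_lambertPairTerm_of_odd (c := 3) (by decide) (by norm_num) hq2
    (pow_ne_zero 2 hq0) hz₀ hden2).sub (hasSum_lambertPairTerm_of_odd odd_one one_pos hq1 hq0 hz₀
    hden)).div_const (1 - z₀⁻¹)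
  simp only [← mul_sub, mul_div_cancel_left₀ _ hc, lambertTerm, one_mul] at hsum
  rw [tsum_congr fun n : ℕ+ ↦ neg_one_pow_pred_mul_sub_eq_lambertPairTerm_sub z₀ q n.pos,
    hsum.tsum_eq]
  have hPE : ∏' k, (1 - q ^ (2 * k + 2)) = ∏' k, (1 - (q ^ 2) ^ (k + 1)) :=
    tprod_congr fun k ↦ by ring
  have hPE0 : ∏' k, (1 - (q ^ 2) ^ (k + 1)) ≠ 0 := by
    simpa [← pow_mul] using
      tprod_one_sub_pow_comp_ne_zero hq1 (a := fun k ↦ 2 * (k + 1)) (fun k ↦ by omega)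
  have hPO0 : ∏' k, (1 - q * (q ^ 2) ^ k) ≠ 0 := by
    simpa [← pow_mul, ← pow_succ'] using
      tprod_one_sub_pow_comp_ne_zero hq1 (a := fun k ↦ 2 * k + 1) (fun k ↦ by omega)
  have hz1 : 1 - z₀ ≠ 0 := sub_ne_zero.mpr (Ne.symm hz₁)
  rw [Rfun, Cfun, hPE, tprod_one_sub_pow_succ_eq_mul hq1]
  field_simp
  ring
end
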